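/- Let E : L²(μ) → L²(ν) be a Hilbert–Schmidt operator, φ : X → ℝ^d with components in L²(μ) ∩ L²(ν), Φ_μ f = (⟨f, φ_i⟩_{L²(μ)})_i, Φ_ν* z = Σ_i z_i φ_i, and P ∈ ℝ^{d×d}. Then ‖E − Φ_ν* P Φ_μ‖²_{HS} = ‖E‖²_{HS} − 2 E_{(x,y)∼ρ}[⟨φ(x), Pφ(y)⟩] + E_{(x,y)∼ν⊗μ}[⟨φ(x), Pφ(y)⟩²], where ρ(dx,dy) = p(dy|x)ν(dx) is the joint law and E is the associated conditional-expectation operator. -/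

import Mathlib

open MeasureTheory ProbabilityTheory
open scoped BigOperators

open scoped RealInnerProductSpace

set_option linter.unusedSectionVars false
section HSCLHelpers


variable {X : Type*} [MeasurableSpace X]

lemma HSCL_coeFn_finsum {m : Measure X} {κ : Type*}
    (s : Finset κ) (v : κ → Lp ℝ 2 m) :
    ⇑(∑ k ∈ s, v k) =ᵐ[m] fun x => ∑ k ∈ s, v k x := by
  classical
  induction s using Finset.induction_on with
  | empty => simp only [Finset.sum_empty]; exact Lp.coeFn_zero ℝ 2 m
  | @insert a s ha ih =>
    rw [Finset.sum_insert ha]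
    filter_upwards [Lp.coeFn_add (v a) (∑ k ∈ s, v k), ih] with x h1 h2
    simp only [h1, Pi.add_apply, h2, Finset.sum_insert ha]

lemma HSCL_coeFn_lincomb {m : Measure X} {d : ℕ}
    (c : Fin d → ℝ) (u : Fin d → X → ℝ) (hu : ∀ j, MemLp (u j) 2 m) :
    ⇑(∑ j, c j • (hu j).toLp (u j)) =ᵐ[m] fun x => ∑ j, c j * u j x := by
  have h1 := HSCL_coeFn_finsum Finset.univ (fun j => c j • (hu j).toLp (u j))
  have h2 : ∀ᵐ x ∂m, ∀ j, (c j • (hu j).toLp (u j) : Lp ℝ 2 m) x = c j * u j x := by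
    rw [ae_all_iff]
    intro j
    filter_upwards [Lp.coeFn_smul (c j) ((hu j).toLp (u j)), (hu j).coeFn_toLp] with x ha hb
    simp [ha, hb]
  filter_upwards [h1, h2] with x hx hx'
  rw [hx]
  exact Finset.sum_congr rfl fun j _ => hx' j

lemma HSCL_inner_eq_integral {m : Measure X} (f f' : Lp ℝ 2 m) {u v : X → ℝ}
    (hu : ⇑f =ᵐ[m] u) (hv : ⇑f' =ᵐ[m] v) :
    ⟪f, f'⟫ = ∫ x, u x * v x ∂m := by
  rw [L2.inner_def]
  refine integral_congr_ae ?_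
  filter_upwards [hu, hv] with x h1 h2
  simp [h1, h2, RCLike.inner_apply, mul_comm]

lemma HSCL_snd_compProd_eq (ν : Measure X) [IsProbabilityMeasure ν]
    (p : Kernel X X) [IsMarkovKernel p]
    (μ : Measure X) (hμ : μ = ν.bind (fun x => p x)) :
    (ν.compProd p).map Prod.snd = μ := by
  ext s hs
  rw [Measure.map_apply measurable_snd hs, hμ,
    Measure.bind_apply hs p.measurable.aemeasurable,
    Measure.compProd_apply (measurable_snd hs)]
  rfl

lemma HSCL_integrable_compProd_mul (ν : Measure X) [IsProbabilityMeasure ν]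
    (p : Kernel X X) [IsMarkovKernel p]
    (μ : Measure X) [IsProbabilityMeasure μ] (hμ : μ = ν.bind (fun x => p x))
    {f g : X → ℝ} (hf : Measurable f) (hg : Measurable g)
    (hf2 : MemLp f 2 ν) (hg2 : MemLp g 2 μ) :
    Integrable (fun z : X × X => f z.1 * g z.2) (ν.compProd p) := by
  have hfst : (ν.compProd p).map Prod.fst = ν := Measure.fst_compProd ν p
  have hsnd := HSCL_snd_compProd_eq ν p μ hμ
  have h1 : Integrable (fun z : X × X => f z.1 ^ 2) (ν.compProd p) := by
    have hi := hf2.integrable_sq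
    rw [← hfst] at hi
    exact (integrable_map_measure ((hf.pow_const 2).aestronglyMeasurable)
      measurable_fst.aemeasurable).mp hi
  have h2 : Integrable (fun z : X × X => g z.2 ^ 2) (ν.compProd p) := by
    have hi := hg2.integrable_sq
    rw [← hsnd] at hi
    exact (integrable_map_measure ((hg.pow_const 2).aestronglyMeasurable)
      measurable_snd.aemeasurable).mp hi
  refine Integrable.mono' ((h1.add h2).const_mul 2⁻¹)
    ((hf.comp measurable_fst).mul (hg.comp measurable_snd)).aestronglyMeasurable
    (ae_of_all _ fun z => ?_)
  have h3 : |f z.1| * |g z.2| ≤ 2⁻¹ * (f z.1 ^ 2 + g z.2 ^ 2) := by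
    nlinarith [sq_nonneg (|f z.1| - |g z.2|), sq_abs (f z.1), sq_abs (g z.2),
      abs_nonneg (f z.1), abs_nonneg (g z.2)]
  simpa [Real.norm_eq_abs, abs_mul] using h3


end HSCLHelpers

noncomputable section HSCLMid


variable {X : Type*} [MeasurableSpace X] {d : ℕ}

/-- The vector `w i = ∑ j, P i j • φ j` in `L²(μ)`. -/
def HSCL_w (μ : Measure X) (φ : Fin d → X → ℝ)
    (hφ : ∀ i, MemLp (φ i) 2 μ) (P : Matrix (Fin d) (Fin d) ℝ) (i : Fin d) : Lp ℝ 2 μ :=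
  ∑ j, P i j • (hφ j).toLp (φ j)

lemma HSCL_w_coe (μ : Measure X) (φ : Fin d → X → ℝ)
    (hφ : ∀ i, MemLp (φ i) 2 μ) (P : Matrix (Fin d) (Fin d) ℝ) (i : Fin d) :
    ⇑(HSCL_w μ φ hφ P i) =ᵐ[μ] fun y => ∑ j, P i j * φ j y :=
  HSCL_coeFn_lincomb (P i) φ hφ

lemma HSCL_w_memℒp (μ : Measure X) (φ : Fin d → X → ℝ)
    (hφ : ∀ i, MemLp (φ i) 2 μ) (P : Matrix (Fin d) (Fin d) ℝ) (i : Fin d) :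
    MemLp (fun y => ∑ j, P i j * φ j y) 2 μ :=
  (Lp.memLp (HSCL_w μ φ hφ P i)).ae_eq (HSCL_w_coe μ φ hφ P i)

lemma HSCL_inner_w (μ : Measure X) (φ : Fin d → X → ℝ)
    (hφ : ∀ i, MemLp (φ i) 2 μ) (P : Matrix (Fin d) (Fin d) ℝ) (i : Fin d)
    (f : Lp ℝ 2 μ) :
    ⟪f, HSCL_w μ φ hφ P i⟫ = ∑ j, P i j * ∫ y, (f : X → ℝ) y * φ j y ∂μ := by
  rw [HSCL_w, inner_sum]
  refine Finset.sum_congr rfl fun j _ => ?_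
  rw [real_inner_smul_right]
  congr 1
  exact HSCL_inner_eq_integral f ((hφ j).toLp (φ j)) Filter.EventuallyEq.rfl ((hφ j).coeFn_toLp)

variable (ν : Measure X) [IsProbabilityMeasure ν] (μ : Measure X) [IsProbabilityMeasure μ]
  (φ : Fin d → X → ℝ) (hφL2μ : ∀ i, MemLp (φ i) 2 μ) (hφL2ν : ∀ i, MemLp (φ i) 2 ν)
  (P : Matrix (Fin d) (Fin d) ℝ)

lemma HSCL_T_eq
    (T : Lp ℝ 2 μ →L[ℝ] Lp ℝ 2 ν)
    (hT : ∀ f : Lp ℝ 2 μ, (T f : X → ℝ)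
      =ᵐ[ν] fun x => ∑ i : Fin d, ∑ j : Fin d, φ i x * P i j * ∫ y, (f : X → ℝ) y * φ j y ∂μ)
    (f : Lp ℝ 2 μ) :
    T f = ∑ i, ⟪f, HSCL_w μ φ hφL2μ P i⟫ • (hφL2ν i).toLp (φ i) := by
  apply Lp.ext
  have h2 := HSCL_coeFn_lincomb (fun i => ⟪f, HSCL_w μ φ hφL2μ P i⟫) φ hφL2ν
  filter_upwards [hT f, h2] with x hx hx'
  rw [hx, hx']
  refine Finset.sum_congr rfl fun i _ => ?_
  rw [HSCL_inner_w, Finset.sum_mul]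
  exact Finset.sum_congr rfl fun j _ => by ring

lemma HSCL_cross_inner
    (E T : Lp ℝ 2 μ →L[ℝ] Lp ℝ 2 ν)
    (hT : ∀ f : Lp ℝ 2 μ, (T f : X → ℝ)
      =ᵐ[ν] fun x => ∑ i : Fin d, ∑ j : Fin d, φ i x * P i j * ∫ y, (f : X → ℝ) y * φ j y ∂μ)
    (f : Lp ℝ 2 μ) :
    ⟪E f, T f⟫ = ∑ i, ⟪f, HSCL_w μ φ hφL2μ P i⟫ * ⟪E f, (hφL2ν i).toLp (φ i)⟫ := by
  rw [HSCL_T_eq ν μ φ hφL2μ hφL2ν P T hT f, inner_sum]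
  exact Finset.sum_congr rfl fun i _ => real_inner_smul_right _ _ _

lemma HSCL_normT_sq
    (T : Lp ℝ 2 μ →L[ℝ] Lp ℝ 2 ν)
    (hT : ∀ f : Lp ℝ 2 μ, (T f : X → ℝ)
      =ᵐ[ν] fun x => ∑ i : Fin d, ∑ j : Fin d, φ i x * P i j * ∫ y, (f : X → ℝ) y * φ j y ∂μ)
    (f : Lp ℝ 2 μ) :
    ‖T f‖ ^ 2 = ∑ i, ∑ k, ⟪f, HSCL_w μ φ hφL2μ P i⟫ * ⟪f, HSCL_w μ φ hφL2μ P k⟫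
      * ⟪(hφL2ν i).toLp (φ i), (hφL2ν k).toLp (φ k)⟫ := by
  rw [← real_inner_self_eq_norm_sq, HSCL_T_eq ν μ φ hφL2μ hφL2ν P T hT f, sum_inner]
  refine Finset.sum_congr rfl fun i _ => ?_
  rw [inner_sum]
  refine Finset.sum_congr rfl fun k _ => ?_
  rw [real_inner_smul_left, real_inner_smul_right]
  ring


end HSCLMid

noncomputable section HSCLMain

variable {X : Type*} [MeasurableSpace X] {d : ℕ}

lemma HSCL_integrable_mul {m : Measure X} {u v : X → ℝ}
    (hu : MemLp u 2 m) (hv : MemLp v 2 m) :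
    Integrable (fun x => u x * v x) m := by
  have h := L2.integrable_inner (𝕜 := ℝ) (hu.toLp u) (hv.toLp v)
  refine h.congr ?_
  filter_upwards [hu.coeFn_toLp, hv.coeFn_toLp] with x h1 h2
  simp [h1, h2, RCLike.inner_apply, mul_comm]

lemma HSCL_ae_kernel (ν : Measure X) [IsProbabilityMeasure ν]
    (p : Kernel X X) [IsMarkovKernel p]
    (μ : Measure X) (hμ : μ = ν.bind (fun x => p x))
    {u u' : X → ℝ} (h : u =ᵐ[μ] u') :
    ∀ᵐ x ∂ν, u =ᵐ[p x] u' := by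
  have h0 : μ {y | ¬ u y = u' y} = 0 := h
  obtain ⟨N, hsN, hNm, hN0⟩ := exists_measurable_superset_of_null h0
  rw [hμ, Measure.bind_apply hNm p.measurable.aemeasurable] at hN0
  have h1 := (lintegral_eq_zero_iff (p.measurable_coe hNm)).mp hN0
  filter_upwards [h1] with x hx
  have h2 : (p x) {y | ¬ u y = u' y} = 0 := measure_mono_null hsN hx
  exact h2

lemma HSCL_E_coe (ν : Measure X) [IsProbabilityMeasure ν]
    (p : Kernel X X) [IsMarkovKernel p]
    (μ : Measure X) [IsProbabilityMeasure μ] (hμ : μ = ν.bind (fun x => p x))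
    (E : Lp ℝ 2 μ →L[ℝ] Lp ℝ 2 ν)
    (hE : ∀ f : Lp ℝ 2 μ, (E f : X → ℝ) =ᵐ[ν] fun x => ∫ y, (f : X → ℝ) y ∂(p x))
    (f : Lp ℝ 2 μ) {u : X → ℝ} (hu : ⇑f =ᵐ[μ] u) :
    (E f : X → ℝ) =ᵐ[ν] fun x => ∫ y, u y ∂(p x) := by
  filter_upwards [hE f, HSCL_ae_kernel ν p μ hμ hu] with x h1 h2
  rw [h1]
  exact integral_congr_ae h2


variable (ν : Measure X) [IsProbabilityMeasure ν] (p : Kernel X X) [IsMarkovKernel p]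
  (μ : Measure X) [IsProbabilityMeasure μ] (hμ : μ = ν.bind (fun x => p x))
  (φ : Fin d → X → ℝ) (hφ_meas : ∀ i, Measurable (φ i))
  (hφL2μ : ∀ i, MemLp (φ i) 2 μ) (hφL2ν : ∀ i, MemLp (φ i) 2 ν)
  (P : Matrix (Fin d) (Fin d) ℝ)

set_option linter.unusedSectionVars false

include hφ_meas in
lemma HSCL_W_meas (i : Fin d) : Measurable (fun y => ∑ j, P i j * φ j y) :=
  Finset.measurable_sum _ fun j _ => (hφ_meas j).const_mul (P i j)

include hμ hφ_meas hφL2μ hφL2ν in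
lemma HSCL_int_cross (i : Fin d) :
    Integrable (fun z : X × X => φ i z.1 * ∑ j, P i j * φ j z.2) (ν.compProd p) :=
  HSCL_integrable_compProd_mul ν p μ hμ (hφ_meas i) (HSCL_W_meas φ hφ_meas P i)
    (hφL2ν i) (HSCL_w_memℒp μ φ hφL2μ P i)

include hμ hφ_meas hφL2μ hφL2ν in
lemma HSCL_cross_int
    (E : Lp ℝ 2 μ →L[ℝ] Lp ℝ 2 ν)
    (hE : ∀ f : Lp ℝ 2 μ, (E f : X → ℝ) =ᵐ[ν] fun x => ∫ y, (f : X → ℝ) y ∂(p x))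
    (i : Fin d) :
    ⟪E (HSCL_w μ φ hφL2μ P i), (hφL2ν i).toLp (φ i)⟫
      = ∫ z, φ i z.1 * ∑ j, P i j * φ j z.2 ∂(ν.compProd p) := by
  rw [real_inner_comm,
    HSCL_inner_eq_integral ((hφL2ν i).toLp (φ i)) (E (HSCL_w μ φ hφL2μ P i))
      (hφL2ν i).coeFn_toLp
      (HSCL_E_coe ν p μ hμ E hE _ (HSCL_w_coe μ φ hφL2μ P i)),
    Measure.integral_compProd (HSCL_int_cross ν p μ hμ φ hφ_meas hφL2μ hφL2ν P i)]
  refine integral_congr_ae (Filter.Eventually.of_forall fun x => ?_)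
  exact (integral_const_mul _ _).symm

include hμ hφ_meas hφL2μ hφL2ν in
lemma HSCL_cross_sum
    (E : Lp ℝ 2 μ →L[ℝ] Lp ℝ 2 ν)
    (hE : ∀ f : Lp ℝ 2 μ, (E f : X → ℝ) =ᵐ[ν] fun x => ∫ y, (f : X → ℝ) y ∂(p x)) :
    ∑ i, ⟪E (HSCL_w μ φ hφL2μ P i), (hφL2ν i).toLp (φ i)⟫
      = ∫ z, (∑ i : Fin d, ∑ j : Fin d, φ i z.1 * P i j * φ j z.2) ∂(ν.compProd p) := by
  rw [Finset.sum_congr rfl fun i _ => HSCL_cross_int ν p μ hμ φ hφ_meas hφL2μ hφL2ν P E hE i,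
    ← integral_finset_sum _ fun i _ => HSCL_int_cross ν p μ hμ φ hφ_meas hφL2μ hφL2ν P i]
  refine integral_congr_ae (Filter.Eventually.of_forall fun z => ?_)
  refine Finset.sum_congr rfl fun i _ => ?_
  rw [Finset.mul_sum]
  exact Finset.sum_congr rfl fun j _ => by ring

lemma HSCL_sq_int :
    ∑ i, ∑ k, ⟪HSCL_w μ φ hφL2μ P i, HSCL_w μ φ hφL2μ P k⟫
        * ⟪(hφL2ν i).toLp (φ i), (hφL2ν k).toLp (φ k)⟫
      = ∫ z, (∑ i : Fin d, ∑ j : Fin d, φ i z.1 * P i j * φ j z.2) ^ 2 ∂(ν.prod μ) := by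
  have hptwise : ∀ z : X × X,
      (∑ i : Fin d, ∑ j : Fin d, φ i z.1 * P i j * φ j z.2) ^ 2
        = ∑ i, ∑ k, (φ i z.1 * φ k z.1) * ((∑ j, P i j * φ j z.2) * (∑ j, P k j * φ j z.2)) := by
    intro z
    have hz : (∑ i : Fin d, ∑ j : Fin d, φ i z.1 * P i j * φ j z.2)
        = ∑ i, φ i z.1 * ∑ j, P i j * φ j z.2 := by
      refine Finset.sum_congr rfl fun i _ => ?_
      rw [Finset.mul_sum]
      exact Finset.sum_congr rfl fun j _ => by ring
    rw [hz, sq, Finset.sum_mul_sum]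
    exact Finset.sum_congr rfl fun i _ => Finset.sum_congr rfl fun k _ => by ring
  have hint : ∀ i k : Fin d, Integrable
      (fun z : X × X => (φ i z.1 * φ k z.1) * ((∑ j, P i j * φ j z.2) * (∑ j, P k j * φ j z.2)))
      (ν.prod μ) := fun i k =>
    Integrable.mul_prod (HSCL_integrable_mul (hφL2ν i) (hφL2ν k))
      (HSCL_integrable_mul (HSCL_w_memℒp μ φ hφL2μ P i) (HSCL_w_memℒp μ φ hφL2μ P k))
  rw [integral_congr_ae (Filter.Eventually.of_forall hptwise),
    integral_finset_sum _ fun i _ => integrable_finset_sum _ fun k _ => hint i k]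
  refine Finset.sum_congr rfl fun i _ => ?_
  rw [integral_finset_sum _ fun k _ => hint i k]
  refine Finset.sum_congr rfl fun k _ => ?_
  rw [integral_prod_mul (f := fun x => φ i x * φ k x)
      (g := fun y => (∑ j, P i j * φ j y) * ∑ j, P k j * φ j y),
    ← HSCL_inner_eq_integral ((hφL2ν i).toLp (φ i)) ((hφL2ν k).toLp (φ k))
      (hφL2ν i).coeFn_toLp (hφL2ν k).coeFn_toLp,
    ← HSCL_inner_eq_integral (HSCL_w μ φ hφL2μ P i) (HSCL_w μ φ hφL2μ P k)
      (HSCL_w_coe μ φ hφL2μ P i) (HSCL_w_coe μ φ hφL2μ P k),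
    mul_comm]


variable {ι : Type*} (ν : Measure X) [IsProbabilityMeasure ν]
  (μ : Measure X) [IsProbabilityMeasure μ]
  (φ : Fin d → X → ℝ)
  (hφL2μ : ∀ i, MemLp (φ i) 2 μ) (hφL2ν : ∀ i, MemLp (φ i) 2 ν)
  (P : Matrix (Fin d) (Fin d) ℝ)

set_option linter.unusedSectionVars false

lemma HSCL_parseval_cross
    (E T : Lp ℝ 2 μ →L[ℝ] Lp ℝ 2 ν)
    (hT : ∀ f : Lp ℝ 2 μ, (T f : X → ℝ)
      =ᵐ[ν] fun x => ∑ i : Fin d, ∑ j : Fin d, φ i x * P i j * ∫ y, (f : X → ℝ) y * φ j y ∂μ)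
    (b : HilbertBasis ι ℝ (Lp ℝ 2 μ)) :
    Summable (fun m : ι => ⟪E (b m), T (b m)⟫) ∧
    ∑' m : ι, ⟪E (b m), T (b m)⟫
      = ∑ i, ⟪E (HSCL_w μ φ hφL2μ P i), (hφL2ν i).toLp (φ i)⟫ := by
  have hterm : ∀ m : ι, ⟪E (b m), T (b m)⟫
      = ∑ i, ⟪HSCL_w μ φ hφL2μ P i, b m⟫
          * ⟪b m, (ContinuousLinearMap.adjoint E) ((hφL2ν i).toLp (φ i))⟫ := by
    intro m
    rw [HSCL_cross_inner ν μ φ hφL2μ hφL2ν P E T hT (b m)]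
    refine Finset.sum_congr rfl fun i _ => ?_
    rw [ContinuousLinearMap.adjoint_inner_right, real_inner_comm (b m)]
  have hsumm : ∀ i : Fin d, Summable fun m : ι =>
      ⟪HSCL_w μ φ hφL2μ P i, b m⟫
        * ⟪b m, (ContinuousLinearMap.adjoint E) ((hφL2ν i).toLp (φ i))⟫ :=
    fun i => b.summable_inner_mul_inner _ _
  refine ⟨Summable.congr (summable_sum fun i _ => hsumm i) fun m => (hterm m).symm, ?_⟩
  rw [tsum_congr hterm, Summable.tsum_finsetSum fun i _ => hsumm i]
  refine Finset.sum_congr rfl fun i _ => ?_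
  rw [b.tsum_inner_mul_inner, ContinuousLinearMap.adjoint_inner_right]

lemma HSCL_parseval_sq
    (T : Lp ℝ 2 μ →L[ℝ] Lp ℝ 2 ν)
    (hT : ∀ f : Lp ℝ 2 μ, (T f : X → ℝ)
      =ᵐ[ν] fun x => ∑ i : Fin d, ∑ j : Fin d, φ i x * P i j * ∫ y, (f : X → ℝ) y * φ j y ∂μ)
    (b : HilbertBasis ι ℝ (Lp ℝ 2 μ)) :
    Summable (fun m : ι => ‖T (b m)‖ ^ 2) ∧
    ∑' m : ι, ‖T (b m)‖ ^ 2
      = ∑ i, ∑ k, ⟪HSCL_w μ φ hφL2μ P i, HSCL_w μ φ hφL2μ P k⟫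
          * ⟪(hφL2ν i).toLp (φ i), (hφL2ν k).toLp (φ k)⟫ := by
  have hterm : ∀ m : ι, ‖T (b m)‖ ^ 2
      = ∑ i, ∑ k, (⟪HSCL_w μ φ hφL2μ P i, b m⟫ * ⟪b m, HSCL_w μ φ hφL2μ P k⟫)
          * ⟪(hφL2ν i).toLp (φ i), (hφL2ν k).toLp (φ k)⟫ := by
    intro m
    rw [HSCL_normT_sq ν μ φ hφL2μ hφL2ν P T hT (b m)]
    refine Finset.sum_congr rfl fun i _ => Finset.sum_congr rfl fun k _ => ?_
    nth_rewrite 1 [real_inner_comm (b m) (HSCL_w μ φ hφL2μ P i)]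
    ring
  have hsumm : ∀ i k : Fin d, Summable fun m : ι =>
      (⟪HSCL_w μ φ hφL2μ P i, b m⟫ * ⟪b m, HSCL_w μ φ hφL2μ P k⟫)
        * ⟪(hφL2ν i).toLp (φ i), (hφL2ν k).toLp (φ k)⟫ :=
    fun i k => (b.summable_inner_mul_inner _ _).mul_right _
  refine ⟨Summable.congr (summable_sum fun i _ => summable_sum fun k _ => hsumm i k)
    fun m => (hterm m).symm, ?_⟩
  rw [tsum_congr hterm, Summable.tsum_finsetSum fun i _ => summable_sum fun k _ => hsumm i k]
  refine Finset.sum_congr rfl fun i _ => ?_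
  rw [Summable.tsum_finsetSum fun k _ => hsumm i k]
  refine Finset.sum_congr rfl fun k _ => ?_
  rw [tsum_mul_right, b.tsum_inner_mul_inner]


end HSCLMain




/-- Hilbert–Schmidt expansion of the contrastive loss: for the evolution operator
`E : L²(μ) → L²(ν)` (assumed Hilbert–Schmidt) and the finite-rank operator
`T = Φ_ν* P Φ_μ`, one has
`‖E − T‖²_HS = ‖E‖²_HS − 2 E_ρ[⟨φ(x), Pφ(y)⟩] + E_{ν⊗μ}[⟨φ(x), Pφ(y)⟩²]`,
where `ρ = p(dy|x)ν(dx)` is the joint law and Hilbert–Schmidt norms are computed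
through a Hilbert basis of `L²(μ)`. -/
theorem hilbert_schmidt_contrastive_loss {X : Type*} [MeasurableSpace X] {d : ℕ}
    {ι : Type*} (ν : Measure X) [IsProbabilityMeasure ν]
    (p : Kernel X X) [IsMarkovKernel p]
    (μ : Measure X) [IsProbabilityMeasure μ] (hμ : μ = ν.bind (fun x => p x))
    (φ : Fin d → X → ℝ) (hφ_meas : ∀ i, Measurable (φ i))
    (hφL2μ : ∀ i, MemLp (φ i) 2 μ) (hφL2ν : ∀ i, MemLp (φ i) 2 ν)
    (P : Matrix (Fin d) (Fin d) ℝ)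
    (E T : Lp ℝ 2 μ →L[ℝ] Lp ℝ 2 ν)
    (hE : ∀ f : Lp ℝ 2 μ, (E f : X → ℝ) =ᵐ[ν] fun x => ∫ y, (f : X → ℝ) y ∂(p x))
    (hT : ∀ f : Lp ℝ 2 μ, (T f : X → ℝ)
      =ᵐ[ν] fun x => ∑ i : Fin d, ∑ j : Fin d, φ i x * P i j * ∫ y, (f : X → ℝ) y * φ j y ∂μ)
    (b : HilbertBasis ι ℝ (Lp ℝ 2 μ))
    (hHS : Summable fun i : ι => ‖E (b i)‖ ^ 2) :
    ∑' i : ι, ‖(E - T) (b i)‖ ^ 2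
      = (∑' i : ι, ‖E (b i)‖ ^ 2)
        - 2 * ∫ z, (∑ i : Fin d, ∑ j : Fin d, φ i z.1 * P i j * φ j z.2) ∂(ν.compProd p)
        + ∫ z, (∑ i : Fin d, ∑ j : Fin d, φ i z.1 * P i j * φ j z.2) ^ 2 ∂(ν.prod μ) := by
  obtain ⟨hs1, ht1⟩ := HSCL_parseval_cross ν μ φ hφL2μ hφL2ν P E T hT b
  obtain ⟨hs2, ht2⟩ := HSCL_parseval_sq ν μ φ hφL2μ hφL2ν P T hT b
  have hET : ∀ m : ι, ‖(E - T) (b m)‖ ^ 2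
      = ‖E (b m)‖ ^ 2 - 2 * ⟪E (b m), T (b m)⟫ + ‖T (b m)‖ ^ 2 := fun m => by
    rw [ContinuousLinearMap.sub_apply]
    exact norm_sub_sq_real _ _
  rw [tsum_congr hET, Summable.tsum_add ((hHS.sub (hs1.mul_left 2))) hs2,
    Summable.tsum_sub hHS (hs1.mul_left 2), tsum_mul_left, ht1, ht2,
    HSCL_cross_sum ν p μ hμ φ hφ_meas hφL2μ hφL2ν P E hE,
    HSCL_sq_int ν μ φ hφL2μ hφL2ν P]
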